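/- arXiv:2408.08942 — 3 statements merged into one kernel-verified Lean document; each statement's English description precedes it below -/
import Mathlib

section
/- In the non-interacting case γ = 0 with 0 ≤ β < 1/3 and Ω_{m0}, Ω_{r0} > 0, the deceleration parameter q(z) is positive for all z > -1; i.e., no transition to acceleration occurs. -/
theorem no_acceleration_noninteracting
    (Ωm0 Ωr0 γ β : ℝ) (hΩm : 0 < Ωm0) (hΩr : 0 < Ωr0)
    (hγ : γ = 0) (hβ0 : 0 ≤ β) (hβ : β < 1 / 3) :
    ∀ z : ℝ, -1 < z →
      0 < (Ωm0 * (1 - 3 * β + 3 * γ) * (1 + z) ^ (3 * γ : ℝ)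
            + 2 * Ωr0 * (1 + z) ^ (1 + 3 * β : ℝ)) /
          (2 * (Ωm0 * (1 + z) ^ (3 * γ : ℝ) + Ωr0 * (1 + z) ^ (1 + 3 * β : ℝ))) := by
  intro z hz
  have hx : (0:ℝ) < 1 + z := by linarith
  have h1 : (0:ℝ) < (1 + z) ^ (3 * γ : ℝ) := Real.rpow_pos_of_pos hx _
  have h2 : (0:ℝ) < (1 + z) ^ (1 + 3 * β : ℝ) := Real.rpow_pos_of_pos hx _
  have hc : (0:ℝ) < 1 - 3 * β + 3 * γ := by rw [hγ]; linarith
  apply div_pos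
  · have := mul_pos (mul_pos hΩm hc) h1
    nlinarith
  · nlinarith
end

section
/- The Jacobian of the system (autonomous, Hubble cutoff) at a critical point (0, u_c, 0) has eigenvalues 0, (4 - b² + 3u_c)/2, and 1 - b² + 3β - 3γ + 3u_c. -/
/-- Vector field of the Model 2 autonomous system with Hubble horizon IR cutoff. -/
noncomputable def Fhub (α β γ b : ℝ) (p : ℝ × ℝ × ℝ) : ℝ × ℝ × ℝ :=
  let x := p.1; let u := p.2.1; let z := p.2.2
  (x * (-3 * γ - b ^ 2 + (1 + 3 * β + 3 * α * z / (1 - z)) * (1 - x) + 3 * u),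
   -(b ^ 2 / (3 * (1 - b ^ 2))) *
     (x * (-3 * γ - b ^ 2 + (1 + 3 * β + 3 * α * z / (1 - z)) * (1 - x) + 3 * u) *
        (1 + 3 * β - 3 * γ / b ^ 2 + 3 * α * z / (1 - z))
      - 3 * α * x / (1 - z) ^ 2),
   z * (1 - z) / 2 *
     (4 - b ^ 2 + 3 * u - x * (1 + 3 * β + 3 * α * z / (1 - z))))

/-- The Jacobian matrix of `Fhub` at a point, computed via Fréchet derivatives. -/
noncomputable def Jhub (α β γ b : ℝ) (p : ℝ × ℝ × ℝ) : Matrix (Fin 3) (Fin 3) ℝ :=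
  let e : Fin 3 → ℝ × ℝ × ℝ := ![(1, 0, 0), (0, 1, 0), (0, 0, 1)]
  Matrix.of fun i j =>
    fderiv ℝ (fun q => ![(Fhub α β γ b q).1, (Fhub α β γ b q).2.1,
      (Fhub α β γ b q).2.2] i) p (e j)

set_option maxHeartbeats 1000000 in
lemma Jhub_entries (α β γ b u_c : ℝ) :
    Jhub α β γ b (0,u_c,0) 0 0 = 1 - b^2 + 3*β - 3*γ + 3*u_c ∧
    Jhub α β γ b (0,u_c,0) 0 1 = 0 ∧
    Jhub α β γ b (0,u_c,0) 0 2 = 0 ∧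
    Jhub α β γ b (0,u_c,0) 1 1 = 0 ∧
    Jhub α β γ b (0,u_c,0) 1 2 = 0 ∧
    Jhub α β γ b (0,u_c,0) 2 0 = 0 ∧
    Jhub α β γ b (0,u_c,0) 2 1 = 0 ∧
    Jhub α β γ b (0,u_c,0) 2 2 = (4 - b^2 + 3*u_c)/2 := by
  have hX : HasFDerivAt (fun q : ℝ×ℝ×ℝ => q.1) (ContinuousLinearMap.fst ℝ ℝ (ℝ×ℝ)) (0,u_c,0) :=
    hasFDerivAt_fst
  have hU : HasFDerivAt (fun q : ℝ×ℝ×ℝ => q.2.1)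
      ((ContinuousLinearMap.fst ℝ ℝ ℝ).comp (ContinuousLinearMap.snd ℝ ℝ (ℝ×ℝ))) (0,u_c,0) :=
    hasFDerivAt_fst.comp _ hasFDerivAt_snd
  have hZ : HasFDerivAt (fun q : ℝ×ℝ×ℝ => q.2.2)
      ((ContinuousLinearMap.snd ℝ ℝ ℝ).comp (ContinuousLinearMap.snd ℝ ℝ (ℝ×ℝ))) (0,u_c,0) :=
    hasFDerivAt_snd.comp _ hasFDerivAt_snd
  have hI1 := (((hasDerivAt_id (0:ℝ)).const_sub 1).inv (by norm_num)).comp_hasFDerivAt (0,u_c,0) hZ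
  have hW := (hZ.const_mul (3*α)).mul hI1
  have h1 := hW.const_add (1+3*β)
  have hG := ((h1.mul (hX.const_sub 1)).const_add (-3*γ - b^2)).add (hU.const_mul 3)
  have hF1 := hX.mul hG
  have hH := hW.const_add (1+3*β-3*γ*(b^2)⁻¹)
  have hI2 := ((((hasDerivAt_id (0:ℝ)).const_sub 1).pow 2).inv (by norm_num)).comp_hasFDerivAt (0,u_c,0) hZ
  have hB := (hX.const_mul (3*α)).mul hI2
  have hF2 := ((hF1.mul hH).sub hB).const_mul (-(b^2 * (3*(1-b^2))⁻¹))
  have hZZ := (hZ.mul (hZ.const_sub 1)).mul_const (2⁻¹:ℝ)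
  have hK := ((hU.const_mul 3).const_add (4-b^2)).sub (hX.mul h1)
  have hF3 := hZZ.mul hK
  have e1 : fderiv ℝ (fun q : ℝ×ℝ×ℝ =>
      q.1 * (-3 * γ - b ^ 2 + (1 + 3 * β + 3 * α * q.2.2 * (1 - q.2.2)⁻¹) * (1 - q.1) + 3 * q.2.1))
      (0, u_c, 0) = _ := hF1.fderiv
  have e2 : fderiv ℝ (fun q : ℝ×ℝ×ℝ =>
      -(b ^ 2 * (3 * (1 - b ^ 2))⁻¹) *
        (q.1 * (-3 * γ - b ^ 2 + (1 + 3 * β + 3 * α * q.2.2 * (1 - q.2.2)⁻¹) * (1 - q.1) + 3 * q.2.1) *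
            (1 + 3 * β - 3 * γ * (b ^ 2)⁻¹ + 3 * α * q.2.2 * (1 - q.2.2)⁻¹) -
          3 * α * q.1 * ((1 - q.2.2) ^ 2)⁻¹)) (0, u_c, 0) = _ := hF2.fderiv
  have e3 : fderiv ℝ (fun q : ℝ×ℝ×ℝ =>
      q.2.2 * (1 - q.2.2) * 2⁻¹ * (4 - b ^ 2 + 3 * q.2.1 - q.1 * (1 + 3 * β + 3 * α * q.2.2 * (1 - q.2.2)⁻¹)))
      (0, u_c, 0) = _ := hF3.fderiv
  refine ⟨?_,?_,?_,?_,?_,?_,?_,?_⟩ <;>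
    simp only [Jhub, Fhub, Matrix.of_apply, Matrix.cons_val_zero, Matrix.cons_val_one,
      Matrix.head_cons, Matrix.cons_val_two, Matrix.tail_cons, div_eq_mul_inv]
  · rw [e1]
    simp only [ContinuousLinearMap.add_apply, ContinuousLinearMap.sub_apply,
      ContinuousLinearMap.smul_apply, ContinuousLinearMap.neg_apply, ContinuousLinearMap.coe_comp',
      ContinuousLinearMap.coe_fst', ContinuousLinearMap.coe_snd', Function.comp_apply, id_eq,
      smul_eq_mul, nsmul_eq_mul]
    norm_num
    try ring
  · rw [e1]
    simp only [ContinuousLinearMap.add_apply, ContinuousLinearMap.sub_apply,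
      ContinuousLinearMap.smul_apply, ContinuousLinearMap.neg_apply, ContinuousLinearMap.coe_comp',
      ContinuousLinearMap.coe_fst', ContinuousLinearMap.coe_snd', Function.comp_apply, id_eq,
      smul_eq_mul, nsmul_eq_mul]
    norm_num
    try ring
  · rw [e1]
    simp only [ContinuousLinearMap.add_apply, ContinuousLinearMap.sub_apply,
      ContinuousLinearMap.smul_apply, ContinuousLinearMap.neg_apply, ContinuousLinearMap.coe_comp',
      ContinuousLinearMap.coe_fst', ContinuousLinearMap.coe_snd', Function.comp_apply, id_eq,
      smul_eq_mul, nsmul_eq_mul]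
    norm_num
    try ring
  · rw [e2]
    simp only [ContinuousLinearMap.add_apply, ContinuousLinearMap.sub_apply,
      ContinuousLinearMap.smul_apply, ContinuousLinearMap.neg_apply, ContinuousLinearMap.coe_comp',
      ContinuousLinearMap.coe_fst', ContinuousLinearMap.coe_snd', Function.comp_apply, id_eq,
      smul_eq_mul, nsmul_eq_mul]
    norm_num
    try ring
  · rw [e2]
    simp only [ContinuousLinearMap.add_apply, ContinuousLinearMap.sub_apply,
      ContinuousLinearMap.smul_apply, ContinuousLinearMap.neg_apply, ContinuousLinearMap.coe_comp',
      ContinuousLinearMap.coe_fst', ContinuousLinearMap.coe_snd', Function.comp_apply, id_eq,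
      smul_eq_mul, nsmul_eq_mul]
    norm_num
    try ring
  · rw [e3]
    simp only [ContinuousLinearMap.add_apply, ContinuousLinearMap.sub_apply,
      ContinuousLinearMap.smul_apply, ContinuousLinearMap.neg_apply, ContinuousLinearMap.coe_comp',
      ContinuousLinearMap.coe_fst', ContinuousLinearMap.coe_snd', Function.comp_apply, id_eq,
      smul_eq_mul, nsmul_eq_mul]
    norm_num
    try ring
  · rw [e3]
    simp only [ContinuousLinearMap.add_apply, ContinuousLinearMap.sub_apply,
      ContinuousLinearMap.smul_apply, ContinuousLinearMap.neg_apply, ContinuousLinearMap.coe_comp',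
      ContinuousLinearMap.coe_fst', ContinuousLinearMap.coe_snd', Function.comp_apply, id_eq,
      smul_eq_mul, nsmul_eq_mul]
    norm_num
    try ring
  · rw [e3]
    simp only [ContinuousLinearMap.add_apply, ContinuousLinearMap.sub_apply,
      ContinuousLinearMap.smul_apply, ContinuousLinearMap.neg_apply, ContinuousLinearMap.coe_comp',
      ContinuousLinearMap.coe_fst', ContinuousLinearMap.coe_snd', Function.comp_apply, id_eq,
      smul_eq_mul, nsmul_eq_mul]
    norm_num
    try ring

theorem C1_jacobian_eigenvalues (α β γ b u_c : ℝ) (hb0 : 0 < b ^ 2) (hb1 : b ^ 2 < 1) :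
    (Jhub α β γ b (0, u_c, 0) - (0 : ℝ) • (1 : Matrix (Fin 3) (Fin 3) ℝ)).det = 0 ∧
    (Jhub α β γ b (0, u_c, 0)
      - ((4 - b ^ 2 + 3 * u_c) / 2) • (1 : Matrix (Fin 3) (Fin 3) ℝ)).det = 0 ∧
    (Jhub α β γ b (0, u_c, 0)
      - (1 - b ^ 2 + 3 * β - 3 * γ + 3 * u_c) • (1 : Matrix (Fin 3) (Fin 3) ℝ)).det = 0 := by
  obtain ⟨h00,h01,h02,h11,h12,h20,h21,h22⟩ := Jhub_entries α β γ b u_c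
  refine ⟨?_,?_,?_⟩ <;>
    simp only [Matrix.det_fin_three, Matrix.sub_apply, Matrix.smul_apply, Matrix.one_apply,
      Fin.isValue, smul_eq_mul, h00,h01,h02,h11,h12,h20,h21,h22, show ((0:Fin 3) ≠ 1) by decide,
      show ((0:Fin 3) ≠ 2) by decide, show ((1:Fin 3) ≠ 0) by decide,
      show ((1:Fin 3) ≠ 2) by decide, show ((2:Fin 3) ≠ 0) by decide,
      show ((2:Fin 3) ≠ 1) by decide, ite_true, ite_false, reduceIte] <;>
    simp <;> ring
end

section
/- At a critical point (0, u_c, 0), the deceleration parameter q = 1 + (1/2)b²(3u_c - b²) is negative if and only if u_c < -1/3 and b² > (3u_c + √(9u_c²+8))/2 (taking b² ∈ (0,1]). -/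
theorem C1_acceleration_condition (u_c b : ℝ) (hb0 : 0 < b ^ 2) (hb1 : b ^ 2 ≤ 1) :
    1 + 1 / 2 * b ^ 2 * (3 * u_c - b ^ 2) < 0 ↔
      (u_c < -(1 / 3) ∧
        (3 * u_c + Real.sqrt (9 * u_c ^ 2 + 8)) / 2 < b ^ 2) := by
  set s := Real.sqrt (9 * u_c ^ 2 + 8) with hsdef
  have hnn : (0:ℝ) ≤ 9 * u_c ^ 2 + 8 := by positivity
  have hs0 : 0 ≤ s := Real.sqrt_nonneg _
  have hs : s ^ 2 = 9 * u_c ^ 2 + 8 := Real.sq_sqrt hnn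
  have hgt : 3 * u_c < s := by nlinarith [hs, hs0]
  constructor
  · intro h
    have hu : u_c < -(1/3) := by nlinarith [hb0, hb1, sq_nonneg b]
    refine ⟨hu, ?_⟩
    have hpos : 0 < 2 * b ^ 2 - 3 * u_c := by nlinarith
    have : s < 2 * b ^ 2 - 3 * u_c := by nlinarith [hs, hs0, hpos]
    linarith
  · rintro ⟨hu, hr⟩
    have h1 : s < 2 * b ^ 2 - 3 * u_c := by linarith
    have h2 : s ^ 2 < (2 * b ^ 2 - 3 * u_c) ^ 2 := by nlinarith [hs0]
    nlinarith [hs]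
end
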